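/- (Björling-type problem for special Lagrangian normal bundles.) Let I ⊆ ℝ be an open interval and let γ₁, γ₂ : I → ℝ³ be real-analytic curves with ⟨γ₁'(t), γ₂(t)⟩ = 0, γ₂(t) ≠ 0, and γ₁'(t) ≠ 0 for all t ∈ I. Then there exist an open set U ⊆ ℝ² containing I × {0} and a smooth map r : U → ℝ³ that is a conformal harmonic immersion (r_uu + r_vv = 0, ⟨r_u,r_v⟩ = 0, ‖r_u‖ = ‖r_v‖ ≠ 0 on U; i.e. a minimal surface S) such that r(t, 0) = γ₁(t) for all t ∈ I and the unit normal n = (r_u × r_v)/‖r_u × r_v‖ satisfies n(t, 0) = γ₂(t)/‖γ₂(t)‖ for all t ∈ I. Consequently the normal bundle ν(S) = { r(u,v) + i·s·n(u,v) : (u,v) ∈ U, s ∈ ℝ } ⊆ ℂ³, which is special Lagrangian, contains the complex curve γ₁ + iγ₂: for every t ∈ I there are (u,v) ∈ U and s ∈ ℝ with r(u,v) + i·s·n(u,v) = γ₁(t) + i·γ₂(t). -/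

import Mathlib

/-- Partial derivative in the first variable of a map `ℝ² → ℝ³`. -/
noncomputable def Du (f : ℝ × ℝ → Fin 3 → ℝ) (p : ℝ × ℝ) : Fin 3 → ℝ :=
  fun i => deriv (fun s => f (s, p.2) i) p.1

/-- Partial derivative in the second variable of a map `ℝ² → ℝ³`. -/
noncomputable def Dv (f : ℝ × ℝ → Fin 3 → ℝ) (p : ℝ × ℝ) : Fin 3 → ℝ :=
  fun i => deriv (fun s => f (p.1, s) i) p.2

/-- The Euclidean inner product on `ℝ³`. -/
def dot3 (a b : Fin 3 → ℝ) : ℝ := a 0 * b 0 + a 1 * b 1 + a 2 * b 2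

/-- The Euclidean norm on `ℝ³`. -/
noncomputable def norm3 (a : Fin 3 → ℝ) : ℝ := Real.sqrt (dot3 a a)

/-- `f` is a conformal harmonic immersion on `U`, i.e. a minimal surface in isothermal
coordinates: `r_uu + r_vv = 0`, `⟨r_u, r_v⟩ = 0`, `‖r_u‖ = ‖r_v‖ ≠ 0`. -/
def ConformalHarmonic (f : ℝ × ℝ → Fin 3 → ℝ) (U : Set (ℝ × ℝ)) : Prop :=
  ∀ p ∈ U, Du (Du f) p + Dv (Dv f) p = 0 ∧ dot3 (Du f p) (Dv f p) = 0 ∧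
    norm3 (Du f p) = norm3 (Dv f p) ∧ norm3 (Du f p) ≠ 0

/-- The unit normal `n = (r_u × r_v)/‖r_u × r_v‖` of a parametrized surface. -/
noncomputable def nvec (r : ℝ × ℝ → Fin 3 → ℝ) (p : ℝ × ℝ) : Fin 3 → ℝ :=
  (norm3 (crossProduct (Du r p) (Dv r p)))⁻¹ • crossProduct (Du r p) (Dv r p)

namespace SLag
open Complex FormalMultilinearSeries

lemma dot3_self_nonneg (a : Fin 3 → ℝ) : 0 ≤ dot3 a a := by
  unfold dot3; nlinarith [sq_nonneg (a 0), sq_nonneg (a 1), sq_nonneg (a 2)]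

lemma dot3_self_pos {a : Fin 3 → ℝ} (h : a ≠ 0) : 0 < dot3 a a := by
  rcases (dot3_self_nonneg a).lt_or_eq with h1 | h1
  · exact h1
  · exfalso; apply h; funext i
    have h0 : a 0 = 0 ∧ a 1 = 0 ∧ a 2 = 0 := by
      unfold dot3 at h1; refine ⟨?_, ?_, ?_⟩ <;> nlinarith [sq_nonneg (a 0), sq_nonneg (a 1), sq_nonneg (a 2)]
    fin_cases i <;> simp [h0.1, h0.2.1, h0.2.2]

lemma norm3_pos {a : Fin 3 → ℝ} (h : a ≠ 0) : 0 < norm3 a :=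
  Real.sqrt_pos.2 (dot3_self_pos h)

lemma norm3_sq {a : Fin 3 → ℝ} : norm3 a ^ 2 = dot3 a a := by
  rw [norm3, Real.sq_sqrt (dot3_self_nonneg a)]

lemma norm3_eq_of_dot3_eq {a b : Fin 3 → ℝ} (h : dot3 a a = dot3 b b) : norm3 a = norm3 b := by
  rw [norm3, norm3, h]

lemma norm3_ne_zero {a : Fin 3 → ℝ} (h : a ≠ 0) : norm3 a ≠ 0 := (norm3_pos h).ne'

lemma norm3_smul_of_nonneg {k : ℝ} (hk : 0 ≤ k) (a : Fin 3 → ℝ) :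
    norm3 (k • a) = k * norm3 a := by
  have : dot3 (k • a) (k • a) = k ^ 2 * dot3 a a := by
    simp [dot3]; ring
  rw [norm3, this, norm3, Real.sqrt_mul (by positivity), Real.sqrt_sq hk]

lemma analyticAt_sqrt {x : ℝ} (hx : 0 < x) : AnalyticAt ℝ Real.sqrt x := by
  have hmem : (x : ℂ) ∈ Complex.slitPlane := by
    rw [Complex.mem_slitPlane_iff]; left; simpa using hx
  have hc : AnalyticAt ℂ (fun z : ℂ => Complex.exp ((1 / 2 : ℂ) * Complex.log z)) (x : ℂ) :=
    analyticAt_cexp.comp (analyticAt_const.mul (analyticAt_clog hmem))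
  have h1 : AnalyticAt ℝ
      (fun y : ℝ => (Complex.exp ((1 / 2 : ℂ) * Complex.log (y : ℂ))).re) x := by
    exact (Complex.reCLM.analyticAt _).comp
      ((hc.restrictScalars).comp (Complex.ofRealCLM.analyticAt x))
  refine h1.congr ?_
  have hev : ∀ᶠ y in nhds x, 0 < y := eventually_gt_nhds hx
  filter_upwards [hev] with y hy
  have hlog : Complex.log (y : ℂ) = (Real.log y : ℂ) := (Complex.ofReal_log hy.le).symm
  rw [hlog]
  have : (1 / 2 : ℂ) * (Real.log y : ℂ) = ((Real.log y / 2 : ℝ) : ℂ) := by push_cast; ring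
  rw [this, ← Complex.ofReal_exp, Complex.ofReal_re]
  rw [Real.sqrt_eq_rpow, Real.rpow_def_of_pos hy]; ring_nf


lemma exists_extension (f : ℝ → Fin 3 → ℂ) (t₀ : ℝ) (hf : AnalyticAt ℝ f t₀) :
    ∃ r : ℝ, 0 < r ∧ ∃ F : ℂ → Fin 3 → ℂ,
      AnalyticOnNhd ℂ F (Metric.ball (t₀ : ℂ) r) ∧ ∀ x : ℝ, |x - t₀| < r → F x = f x := by
  obtain ⟨p, rp, hrp⟩ := hf
  obtain ⟨ρ, hρ0, hρr⟩ := ENNReal.lt_iff_exists_nnreal_btwn.mp hrp.r_pos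
  have hρ0' : (0 : ENNReal) < ρ := hρ0
  have hρpos : (0 : ℝ) < ρ := by exact_mod_cast hρ0
  set q : FormalMultilinearSeries ℂ ℂ (Fin 3 → ℂ) :=
    fun n => ContinuousMultilinearMap.mkPiRing ℂ (Fin n) (p.coeff n) with hq
  have hqcoeff : ∀ n, q.coeff n = p.coeff n := by
    intro n
    show (ContinuousMultilinearMap.mkPiRing ℂ (Fin n) (p.coeff n)) (fun _ => 1) = p.coeff n
    rw [ContinuousMultilinearMap.mkPiRing_apply]
    simp
  have hqnorm : ∀ n, ‖q n‖ = ‖p n‖ := by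
    intro n
    rw [hq, ContinuousMultilinearMap.norm_mkPiRing, p.norm_apply_eq_norm_coef]
  have hrad : (ρ : ENNReal) ≤ q.radius := by
    obtain ⟨C, hC, hb⟩ := p.norm_mul_pow_le_of_lt_radius (lt_of_lt_of_le hρr hrp.r_le)
    exact q.le_radius_of_bound C (fun n => by rw [hqnorm]; exact hb n)
  have hq0 : 0 < q.radius := lt_of_lt_of_le hρ0' hrad
  set F : ℂ → Fin 3 → ℂ := fun z => q.sum (z - (t₀ : ℂ)) with hF
  have hFq : HasFPowerSeriesOnBall F q (t₀ : ℂ) ρ := by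
    refine ⟨hrad, hρ0', fun hy => ?_⟩
    have := (q.hasFPowerSeriesOnBall hq0).hasSum (y := _) (lt_of_lt_of_le hy hrad)
    simpa [hF] using this
  have hfρ : HasFPowerSeriesOnBall f p t₀ ρ := hrp.mono hρ0' hρr.le
  refine ⟨ρ, hρpos, F, ?_, ?_⟩
  · have := hFq.analyticOnNhd
    rwa [Metric.emetric_ball_nnreal] at this
  · intro x hx
    have hnn : ‖(x - t₀ : ℝ)‖₊ < ρ := by
      rw [← NNReal.coe_lt_coe, coe_nnnorm, Real.norm_eq_abs]; exact hx
    have hmem1 : (x - t₀ : ℝ) ∈ Metric.eball (0 : ℝ) ρ := by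
      rw [Metric.mem_eball, edist_zero_right]; exact_mod_cast hnn
    have hmem2 : ((x : ℂ) - (t₀ : ℂ)) ∈ Metric.eball (0 : ℂ) ρ := by
      rw [Metric.mem_eball, edist_zero_right]
      have : ‖(x : ℂ) - (t₀ : ℂ)‖₊ = ‖(x - t₀ : ℝ)‖₊ := by
        rw [← Complex.ofReal_sub]; exact Complex.nnnorm_real _
      rw [enorm_eq_nnnorm, this]; exact_mod_cast hnn
    have hsf := hfρ.hasSum hmem1
    have hsF := hFq.hasSum hmem2
    have hterm : (fun n => q n fun _ => ((x : ℂ) - (t₀ : ℂ)))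
        = fun n => p n fun _ => (x - t₀ : ℝ) := by
      funext n
      rw [FormalMultilinearSeries.apply_eq_pow_smul_coeff,
        FormalMultilinearSeries.apply_eq_pow_smul_coeff, hqcoeff, ← Complex.ofReal_sub,
        ← Complex.ofReal_pow, Complex.coe_smul]
    rw [hterm] at hsF
    have := hsf.unique hsF
    simpa using this.symm


lemma analyticAt_of_hasDerivAt (f F : ℝ → Fin 3 → ℝ) (t₀ : ℝ)
    (hf : AnalyticAt ℝ f t₀) (hF : ∀ᶠ t in nhds t₀, HasDerivAt F (f t) t) :
    AnalyticAt ℝ F t₀ := by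
  obtain ⟨p, rp, hrp⟩ := hf
  obtain ⟨ρ, hρ0, hρr⟩ := ENNReal.lt_iff_exists_nnreal_btwn.mp hrp.r_pos
  have hρ0' : (0 : ENNReal) < ρ := hρ0
  have hρpos : (0 : ℝ) < ρ := by exact_mod_cast hρ0
  have hfρ : HasFPowerSeriesOnBall f p t₀ ρ := hrp.mono hρ0' hρr.le
  set cq : ℕ → (Fin 3 → ℝ) := fun n => Nat.rec 0 (fun m _ => ((m : ℝ) + 1)⁻¹ • p.coeff m) n
    with hcq
  set q : FormalMultilinearSeries ℝ ℝ (Fin 3 → ℝ) :=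
    fun n => ContinuousMultilinearMap.mkPiRing ℝ (Fin n) (cq n) with hqdef
  have hqcoeff : ∀ n, q.coeff n = cq n := by
    intro n
    show (ContinuousMultilinearMap.mkPiRing ℝ (Fin n) (cq n)) (fun _ => 1) = cq n
    rw [ContinuousMultilinearMap.mkPiRing_apply]; simp
  have hqnorm : ∀ n, ‖q n‖ = ‖cq n‖ := fun n => ContinuousMultilinearMap.norm_mkPiRing _
  have hrad : (ρ : ENNReal) ≤ q.radius := by
    obtain ⟨C, hC, hb⟩ := p.norm_mul_pow_le_of_lt_radius (lt_of_lt_of_le hρr hrp.r_le)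
    refine q.le_radius_of_bound (C * ρ) (fun n => ?_)
    match n with
    | 0 => simp [hqnorm, hcq]; positivity
    | (m + 1) =>
      have h1 : ‖cq (m + 1)‖ ≤ ‖p.coeff m‖ := by
        show ‖((m : ℝ) + 1)⁻¹ • p.coeff m‖ ≤ _
        rw [norm_smul]
        have : ‖((m : ℝ) + 1)⁻¹‖ ≤ 1 := by
          rw [Real.norm_eq_abs, _root_.abs_of_nonneg (by positivity),
            inv_le_one_iff₀]
          right; linarith [Nat.cast_nonneg (α := ℝ) m]
        nlinarith [norm_nonneg (p.coeff m)]
      have h2 : ‖p m‖ * (ρ : ℝ) ^ m ≤ C := hb m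
      have h3 : ‖p m‖ = ‖p.coeff m‖ := p.norm_apply_eq_norm_coef
      rw [hqnorm]
      calc ‖cq (m + 1)‖ * (ρ : ℝ) ^ (m + 1) ≤ ‖p.coeff m‖ * (ρ : ℝ) ^ (m + 1) := by
            have : (0:ℝ) ≤ (ρ : ℝ) ^ (m+1) := by positivity
            nlinarith
        _ = ‖p m‖ * (ρ : ℝ) ^ m * ρ := by rw [h3]; ring
        _ ≤ C * ρ := by nlinarith
  have hq0 : 0 < q.radius := lt_of_lt_of_le hρ0' hrad
  set G : ℝ → Fin 3 → ℝ := fun x => q.sum (x - t₀) with hGdef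
  have hGq : HasFPowerSeriesOnBall G q t₀ ρ := by
    refine ⟨hrad, hρ0', fun hy => ?_⟩
    have := (q.hasFPowerSeriesOnBall hq0).hasSum (y := _) (lt_of_lt_of_le hy hrad)
    simpa [hGdef] using this
  have hG' : HasFPowerSeriesOnBall (fderiv ℝ G) q.derivSeries t₀ ρ := hGq.fderiv
  -- key: deriv G = f on the ball
  have key : ∀ y : ℝ, y ∈ Metric.eball (0 : ℝ) (ρ : ENNReal) → deriv G (t₀ + y) = f (t₀ + y) := by
    intro y hy
    have hsf := hfρ.hasSum hy
    have hs1 := (hG'.hasSum hy).mapL (ContinuousLinearMap.apply ℝ (Fin 3 → ℝ) (1 : ℝ))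
    have hterm : (fun n => (ContinuousLinearMap.apply ℝ (Fin 3 → ℝ) (1 : ℝ))
        (q.derivSeries n fun _ => y)) = fun n => p n fun _ => y := by
      funext n
      have e1 : (fun _ : Fin n => y) = fun _ : Fin n => y • (1 : ℝ) := by funext; simp
      rw [ContinuousLinearMap.apply_apply, e1, ContinuousMultilinearMap.map_smul_univ]
      simp only [Finset.prod_const, Finset.card_univ, Fintype.card_fin,
        ContinuousLinearMap.smul_apply]
      rw [q.derivSeries_apply_diag]
      have e2 : q (n + 1) (fun _ => (1 : ℝ)) = q.coeff (n + 1) := rfl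
      rw [e2, hqcoeff]
      have e3 : cq (n + 1) = ((n : ℝ) + 1)⁻¹ • p.coeff n := rfl
      rw [e3, FormalMultilinearSeries.apply_eq_pow_smul_coeff]
      have e4 : (n + 1) • (((n : ℝ) + 1)⁻¹ • p.coeff n) = p.coeff n := by
        rw [← Nat.cast_smul_eq_nsmul ℝ (n + 1), smul_smul]
        have e5 : ((n + 1 : ℕ) : ℝ) * ((n : ℝ) + 1)⁻¹ = 1 := by
          push_cast; field_simp
        rw [e5, one_smul]
      rw [e4]
      simp
    rw [hterm] at hs1
    have := hsf.unique hs1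
    rw [this, ← fderiv_apply_one_eq_deriv]
    simp [ContinuousLinearMap.apply_apply]
  -- F and G differ by a constant near t₀
  obtain ⟨ε, hε0, hεsub⟩ := Metric.eventually_nhds_iff_ball.mp hF
  set ε' : ℝ := min ε ρ with hε'
  have hε'0 : 0 < ε' := lt_min hε0 hρpos
  have hball : ∀ t ∈ Metric.ball t₀ ε', HasDerivAt (fun s => F s - G s) 0 t := by
    intro t ht
    have htε : t ∈ Metric.ball t₀ ε := Metric.ball_subset_ball (min_le_left _ _) ht
    have htρ : (t - t₀ : ℝ) ∈ Metric.eball (0 : ℝ) (ρ : ENNReal) := by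
      rw [Metric.mem_eball, edist_zero_right]
      have h1 : ‖(t - t₀ : ℝ)‖₊ < ρ := by
        rw [← NNReal.coe_lt_coe, coe_nnnorm, Real.norm_eq_abs]
        have := Metric.mem_ball.mp (Metric.ball_subset_ball (min_le_right _ _) ht)
        rwa [Real.dist_eq] at this
      exact_mod_cast h1
    have hGd : HasDerivAt G (f t) t := by
      have h2 : t ∈ Metric.eball t₀ (ρ : ENNReal) := by
        rw [Metric.mem_eball, edist_dist]
        have := Metric.mem_ball.mp (Metric.ball_subset_ball (min_le_right _ _) ht)
        rw [ENNReal.ofReal_lt_iff_lt_toReal (by positivity) (by simp)]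
        simpa using this
      have hd : DifferentiableAt ℝ G t := (hGq.analyticOnNhd t h2).differentiableAt
      have hkey : deriv G t = f t := by
        have := key (t - t₀) htρ
        rwa [add_sub_cancel] at this
      exact hkey ▸ hd.hasDerivAt
    have hFd : HasDerivAt F (f t) t := hεsub t htε
    have := hFd.sub hGd
    rwa [sub_self] at this
  have hconst : ∀ t ∈ Metric.ball t₀ ε', F t - G t = F t₀ - G t₀ := by
    intro t ht
    have hO : Convex ℝ (Metric.ball t₀ ε') := convex_ball _ _
    refine hO.is_const_of_fderivWithin_eq_zero (𝕜 := ℝ) (f := fun s => F s - G s)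
      ?_ ?_ ht (Metric.mem_ball_self hε'0)
    · intro s hs
      exact ((hball s hs).differentiableAt).differentiableWithinAt
    · intro s hs
      rw [fderivWithin_of_isOpen Metric.isOpen_ball hs,
        ((hball s hs).hasFDerivAt).fderiv]
      ext z
      simp
  have hGanalytic : AnalyticAt ℝ G t₀ := hGq.analyticAt
  have hsum : AnalyticAt ℝ (fun t => G t + (F t₀ - G t₀)) t₀ :=
    hGanalytic.add analyticAt_const
  refine hsum.congr ?_
  filter_upwards [Metric.ball_mem_nhds t₀ hε'0] with t ht
  have h := hconst t ht
  show G t + (F t₀ - G t₀) = F t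
  rw [← h]
  abel


lemma cross_dot_self (n c : Fin 3 → ℝ) : dot3 c (crossProduct n c) = 0 := by
  simp [dot3, _root_.cross_apply]; ring

lemma cross_norm (n c : Fin 3 → ℝ) (hu : dot3 n n = 1) (ho : dot3 c n = 0) :
    dot3 (crossProduct n c) (crossProduct n c) = dot3 c c := by
  simp only [dot3, _root_.cross_apply] at *
  simp only [Matrix.cons_val_zero, Matrix.cons_val_one, Matrix.head_cons,
    Matrix.cons_val_two, Matrix.tail_cons]
  nlinarith [hu, ho, sq_nonneg (n 0), sq_nonneg (c 0)]

lemma cross_triple (n c : Fin 3 → ℝ) (ho : dot3 c n = 0) :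
    crossProduct c (crossProduct n c) = dot3 c c • n := by
  simp only [dot3] at ho
  funext i
  rw [_root_.cross_apply, _root_.cross_apply]
  fin_cases i
  · simp only [Matrix.cons_val_zero, Matrix.cons_val_one, Matrix.head_cons, Fin.zero_eta,
      Fin.mk_one, Matrix.cons_val_two, Matrix.tail_cons, Fin.reduceFinMk, Pi.smul_apply,
      smul_eq_mul, dot3, Fin.isValue, Matrix.cons_val_fin_one]
    linear_combination (-(c 0)) * ho
  · simp only [Matrix.cons_val_zero, Matrix.cons_val_one, Matrix.head_cons, Fin.zero_eta,
      Fin.mk_one, Matrix.cons_val_two, Matrix.tail_cons, Fin.reduceFinMk, Pi.smul_apply,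
      smul_eq_mul, dot3, Fin.isValue, Matrix.cons_val_fin_one]
    linear_combination (-(c 1)) * ho
  · simp only [Matrix.cons_val_zero, Matrix.cons_val_one, Matrix.head_cons, Fin.zero_eta,
      Fin.mk_one, Matrix.cons_val_two, Matrix.tail_cons, Fin.reduceFinMk, Pi.smul_apply,
      smul_eq_mul, dot3, Fin.isValue, Matrix.cons_val_fin_one]
    linear_combination (-(c 2)) * ho

/-- points on the real axis accumulate at `c₀` within the punctured plane -/
lemma frequently_real (c₀ ε : ℝ) (hε : 0 < ε) (P : ℂ → Prop)
    (hP : ∀ x : ℝ, x ≠ c₀ → |x - c₀| < ε → P x) :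
    ∃ᶠ z in nhdsWithin (c₀ : ℂ) {(c₀ : ℂ)}ᶜ, P z := by
  set u : ℕ → ℂ := fun n => ((c₀ + ε / (n + 2) : ℝ) : ℂ) with hu
  have hne : ∀ n : ℕ, u n ≠ (c₀ : ℂ) := by
    intro n
    simp only [hu, ne_eq, Complex.ofReal_inj]
    intro h
    have h2 : ε / (n + 2 : ℝ) = 0 := by linarith
    have : (0:ℝ) < ε / (n + 2 : ℝ) := by positivity
    linarith
  have htend0 : Filter.Tendsto (fun n : ℕ => ε / ((n : ℝ) + 2)) Filter.atTop (nhds 0) := by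
    apply Filter.Tendsto.div_atTop tendsto_const_nhds
    exact Filter.tendsto_atTop_add_const_right _ 2 tendsto_natCast_atTop_atTop
  have htendR : Filter.Tendsto (fun n : ℕ => c₀ + ε / ((n : ℝ) + 2)) Filter.atTop (nhds c₀) := by
    have := tendsto_const_nhds (x := c₀) (f := Filter.atTop (α := ℕ)) |>.add htend0
    simpa using this
  have htendC : Filter.Tendsto u Filter.atTop (nhds (c₀ : ℂ)) :=
    (Complex.continuous_ofReal.tendsto c₀).comp htendR
  have htendW : Filter.Tendsto u Filter.atTop (nhdsWithin (c₀ : ℂ) {(c₀ : ℂ)}ᶜ) := by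
    rw [tendsto_nhdsWithin_iff]
    exact ⟨htendC, Filter.Eventually.of_forall (fun n => hne n)⟩
  apply htendW.frequently
  apply Filter.Frequently.of_forall
  intro n
  apply hP
  · intro h
    have h1 : (0:ℝ) < ε / ((n:ℝ) + 2) := by positivity
    have h2 : ε / ((n:ℝ) + 2) = 0 := by linarith
    linarith
  · have h1 : (0:ℝ) < ε / (n + 2 : ℝ) := by positivity
    have h2 : ε / ((n:ℝ) + 2) ≤ ε / 2 := by
      apply div_le_div_of_nonneg_left hε.le (by norm_num)
      · linarith [Nat.cast_nonneg (α := ℝ) n]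
    rw [add_sub_cancel_left, abs_of_pos h1]
    linarith


end SLag

open SLag in
set_option maxHeartbeats 1000000 in
/-- Björling-type problem for special Lagrangian normal bundles: given real-analytic
curves `γ₁, γ₂ : I → ℝ³` with `γ₁' ⊥ γ₂`, `γ₂ ≠ 0`, `γ₁' ≠ 0`, there is a minimal
surface `r` through `γ₁` with unit normal `γ₂/‖γ₂‖` along `γ₁`, whose (special
Lagrangian) normal bundle `{r(u,v) + i·s·n(u,v)}` contains the complex curve
`γ₁ + iγ₂`. -/
theorem stmt11 (I : Set ℝ) (hIopen : IsOpen I) (hIconn : I.OrdConnected)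
    (γ₁ γ₂ : ℝ → Fin 3 → ℝ)
    (hγ₁ : AnalyticOnNhd ℝ γ₁ I) (hγ₂ : AnalyticOnNhd ℝ γ₂ I)
    (horth : ∀ t ∈ I, dot3 (deriv γ₁ t) (γ₂ t) = 0)
    (hγ₂ne : ∀ t ∈ I, γ₂ t ≠ 0)
    (hγ₁'ne : ∀ t ∈ I, deriv γ₁ t ≠ 0) :
    ∃ U : Set (ℝ × ℝ), IsOpen U ∧ (∀ t ∈ I, ((t, 0) : ℝ × ℝ) ∈ U) ∧
      ∃ r : ℝ × ℝ → Fin 3 → ℝ, ContDiffOn ℝ (⊤ : ℕ∞) r U ∧ ConformalHarmonic r U ∧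
        (∀ t ∈ I, r (t, 0) = γ₁ t) ∧
        (∀ t ∈ I, nvec r (t, 0) = (norm3 (γ₂ t))⁻¹ • γ₂ t) ∧
        (∀ t ∈ I, ∃ p ∈ U, ∃ s : ℝ, r p = γ₁ t ∧ s • nvec r p = γ₂ t) := by
  classical
  rcases Set.eq_empty_or_nonempty I with hIe | ⟨a, haI⟩
  · subst hIe
    exact ⟨∅, isOpen_empty, by simp, fun _ => 0, fun p hp => absurd hp (Set.notMem_empty p),
      fun p hp => absurd hp (Set.notMem_empty p), by simp, by simp, by simp⟩
  -- real-analytic data along the curve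
  set c : ℝ → Fin 3 → ℝ := deriv γ₁ with hc_def
  have hcA : AnalyticOnNhd ℝ c I := hγ₁.deriv
  have hγ₂i : ∀ (i : Fin 3), ∀ t ∈ I, AnalyticAt ℝ (fun s => γ₂ s i) t := fun i t ht =>
    ((ContinuousLinearMap.proj (R := ℝ) (φ := fun _ : Fin 3 => ℝ) i).analyticAt _).comp (hγ₂ t ht)
  have hcAi : ∀ (i : Fin 3), ∀ t ∈ I, AnalyticAt ℝ (fun s => c s i) t := fun i t ht =>
    ((ContinuousLinearMap.proj (R := ℝ) (φ := fun _ : Fin 3 => ℝ) i).analyticAt _).comp (hcA t ht)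
  set nn : ℝ → ℝ := fun t => norm3 (γ₂ t) with hnn_def
  have hnnA : ∀ t ∈ I, AnalyticAt ℝ nn t := by
    intro t ht
    have hd2 : AnalyticAt ℝ (fun s => dot3 (γ₂ s) (γ₂ s)) t := by
      have h0 := hγ₂i 0 t ht; have h1 := hγ₂i 1 t ht; have h2 := hγ₂i 2 t ht
      exact ((h0.mul h0).add (h1.mul h1)).add (h2.mul h2)
    have hh : AnalyticAt ℝ (Real.sqrt ∘ fun s => dot3 (γ₂ s) (γ₂ s)) t :=
      (analyticAt_sqrt (dot3_self_pos (hγ₂ne t ht))).comp (f := fun s => dot3 (γ₂ s) (γ₂ s)) hd2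
    exact hh
  have hnnne : ∀ t ∈ I, nn t ≠ 0 := fun t ht => norm3_ne_zero (hγ₂ne t ht)
  set n₀ : ℝ → Fin 3 → ℝ := fun t => (nn t)⁻¹ • γ₂ t with hn₀_def
  have hn₀A : ∀ t ∈ I, AnalyticAt ℝ n₀ t := fun t ht =>
    ((hnnA t ht).inv (hnnne t ht)).smul (hγ₂ t ht)
  have hn₀Ai : ∀ (i : Fin 3), ∀ t ∈ I, AnalyticAt ℝ (fun s => n₀ s i) t := fun i t ht =>
    ((ContinuousLinearMap.proj (R := ℝ) (φ := fun _ : Fin 3 => ℝ) i).analyticAt _).comp (hn₀A t ht)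
  have hnnsq : ∀ t, nn t ^ 2 = dot3 (γ₂ t) (γ₂ t) := fun t => norm3_sq
  have hn₀unit : ∀ t ∈ I, dot3 (n₀ t) (n₀ t) = 1 := by
    intro t ht
    have h1 : dot3 (n₀ t) (n₀ t) = ((nn t)⁻¹) ^ 2 * (nn t ^ 2) := by
      rw [hnnsq t]; simp only [hn₀_def, dot3, Pi.smul_apply, smul_eq_mul]; ring
    rw [h1, inv_pow, inv_mul_cancel₀ (pow_ne_zero 2 (hnnne t ht))]
  have horthc : ∀ t ∈ I, dot3 (c t) (n₀ t) = 0 := by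
    intro t ht
    have h0 := horth t ht
    simp only [hn₀_def, dot3, Pi.smul_apply, smul_eq_mul] at *
    linear_combination ((nn t)⁻¹) * h0
  set g : ℝ → Fin 3 → ℝ := fun t => crossProduct (n₀ t) (c t) with hg_def
  have hgA : ∀ t ∈ I, AnalyticAt ℝ g t := by
    intro t ht
    have hcomp : ∀ (i j : Fin 3), AnalyticAt ℝ (fun s => n₀ s i * c s j) t := fun i j =>
      (hn₀Ai i t ht).mul (hcAi j t ht)
    have h0 : AnalyticAt ℝ (fun s => n₀ s 1 * c s 2 - n₀ s 2 * c s 1) t := (hcomp 1 2).sub (hcomp 2 1)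
    have h1 : AnalyticAt ℝ (fun s => n₀ s 2 * c s 0 - n₀ s 0 * c s 2) t := (hcomp 2 0).sub (hcomp 0 2)
    have h2 : AnalyticAt ℝ (fun s => n₀ s 0 * c s 1 - n₀ s 1 * c s 0) t := (hcomp 0 1).sub (hcomp 1 0)
    have hfin : AnalyticAt ℝ (fun s (i : Fin 3) =>
        ![n₀ s 1 * c s 2 - n₀ s 2 * c s 1, n₀ s 2 * c s 0 - n₀ s 0 * c s 2,
          n₀ s 0 * c s 1 - n₀ s 1 * c s 0] i) t := by
      apply AnalyticAt.pi
      intro i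
      fin_cases i
      · exact h0
      · exact h1
      · exact h2
    apply hfin.congr
    apply Filter.Eventually.of_forall
    intro s
    exact (_root_.cross_apply (n₀ s) (c s)).symm
  have hgAi : ∀ (i : Fin 3), ∀ t ∈ I, AnalyticAt ℝ (fun s => g s i) t := fun i t ht =>
    ((ContinuousLinearMap.proj (R := ℝ) (φ := fun _ : Fin 3 => ℝ) i).analyticAt _).comp (hgA t ht)
  have hgcont : ContinuousOn g I := fun t ht => ((hgA t ht).continuousAt).continuousWithinAt
  set g₁ : ℝ → Fin 3 → ℝ := fun x => ∫ s in a..x, g s with hg₁_def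
  have hg₁d : ∀ t ∈ I, HasDerivAt g₁ (g t) t := by
    intro t ht
    apply intervalIntegral.integral_hasDerivAt_right
    · exact (hgcont.mono (hIconn.uIcc_subset haI ht)).intervalIntegrable
    · exact hgcont.stronglyMeasurableAtFilter hIopen t ht
    · exact (hgcont t ht).continuousAt (hIopen.mem_nhds ht)
  have hg₁A : ∀ t ∈ I, AnalyticAt ℝ g₁ t := by
    intro t ht
    apply analyticAt_of_hasDerivAt g g₁ t (hgA t ht)
    filter_upwards [hIopen.mem_nhds ht] with s hs using hg₁d s hs
  have hg₁Ai : ∀ (i : Fin 3), ∀ t ∈ I, AnalyticAt ℝ (fun s => g₁ s i) t := fun i t ht =>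
    ((ContinuousLinearMap.proj (R := ℝ) (φ := fun _ : Fin 3 => ℝ) i).analyticAt _).comp (hg₁A t ht)
  -- the complex-valued boundary function and its derivative
  set w : ℝ → Fin 3 → ℂ := fun t i => (γ₁ t i : ℂ) - Complex.I * (g₁ t i : ℂ) with hw_def
  set wd : ℝ → Fin 3 → ℂ := fun t i => (c t i : ℂ) - Complex.I * (g t i : ℂ) with hwd_def
  have hγ₁i : ∀ (i : Fin 3), ∀ t ∈ I, AnalyticAt ℝ (fun s => γ₁ s i) t := fun i t ht =>
    ((ContinuousLinearMap.proj (R := ℝ) (φ := fun _ : Fin 3 => ℝ) i).analyticAt _).comp (hγ₁ t ht)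
  have hwA : ∀ t ∈ I, AnalyticAt ℝ w t := by
    intro t ht
    apply AnalyticAt.pi
    intro i
    exact ((Complex.ofRealCLM.analyticAt _).comp (hγ₁i i t ht)).sub
      (analyticAt_const.mul ((Complex.ofRealCLM.analyticAt _).comp (hg₁Ai i t ht)))
  have hwd' : ∀ t ∈ I, HasDerivAt w (wd t) t := by
    intro t ht
    rw [hasDerivAt_pi]
    intro i
    have h1 : HasDerivAt γ₁ (c t) t := ((hγ₁ t ht).differentiableAt).hasDerivAt
    have h1i : HasDerivAt (fun s => γ₁ s i) (c t i) t :=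
      (ContinuousLinearMap.proj (R := ℝ) (φ := fun _ : Fin 3 => ℝ) i).hasFDerivAt.comp_hasDerivAt t h1
    have h2i : HasDerivAt (fun s => g₁ s i) (g t i) t :=
      (ContinuousLinearMap.proj (R := ℝ) (φ := fun _ : Fin 3 => ℝ) i).hasFDerivAt.comp_hasDerivAt t (hg₁d t ht)
    have h1c : HasDerivAt (fun s => ((γ₁ s i : ℝ) : ℂ)) ((c t i : ℂ)) t :=
      Complex.ofRealCLM.hasFDerivAt.comp_hasDerivAt t h1i
    have h2c : HasDerivAt (fun s => ((g₁ s i : ℝ) : ℂ)) ((g t i : ℂ)) t :=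
      Complex.ofRealCLM.hasFDerivAt.comp_hasDerivAt t h2i
    exact h1c.sub (h2c.const_mul Complex.I)
  -- local holomorphic extensions
  have hloc0 : ∀ t₀ : ℝ, ∃ (R : ℝ) (F : ℂ → Fin 3 → ℂ), t₀ ∈ I →
      (0 < R ∧ (∀ x : ℝ, |x - t₀| < R → x ∈ I) ∧
        AnalyticOnNhd ℂ F (Metric.ball (t₀ : ℂ) R) ∧
        ∀ x : ℝ, |x - t₀| < R → F x = w x) := by
    intro t₀
    by_cases ht₀ : t₀ ∈ I
    · obtain ⟨r1, hr1, F, hFa, hFw⟩ := exists_extension w t₀ (hwA t₀ ht₀)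
      obtain ⟨r2, hr2, hsub⟩ := Metric.isOpen_iff.mp hIopen t₀ ht₀
      refine ⟨min r1 r2, F, fun _ => ⟨lt_min hr1 hr2, ?_, hFa.mono (Metric.ball_subset_ball (min_le_left _ _)), fun x hx => hFw x (lt_of_lt_of_le hx (min_le_left _ _))⟩⟩
      intro x hx
      apply hsub
      rw [Metric.mem_ball, Real.dist_eq]
      exact lt_of_lt_of_le hx (min_le_right _ _)
    · exact ⟨0, 0, fun h => absurd h ht₀⟩
  choose R Floc hloc using hloc0
  have hR : ∀ t ∈ I, 0 < R t := fun t ht => (hloc t ht).1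
  have hRsub : ∀ t ∈ I, ∀ x : ℝ, |x - t| < R t → x ∈ I := fun t ht => (hloc t ht).2.1
  have hFA : ∀ t ∈ I, AnalyticOnNhd ℂ (Floc t) (Metric.ball (t : ℂ) (R t)) :=
    fun t ht => (hloc t ht).2.2.1
  have hFw : ∀ t ∈ I, ∀ x : ℝ, |x - t| < R t → Floc t x = w x := fun t ht => (hloc t ht).2.2.2
  have hmem_ball : ∀ (t x : ℝ) (r : ℝ), |x - t| < r → (x : ℂ) ∈ Metric.ball (t : ℂ) r := by
    intro t x r h
    rw [Metric.mem_ball, Complex.isometry_ofReal.dist_eq, Real.dist_eq]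
    exact h
  have hball_mem : ∀ (t x : ℝ) (r : ℝ), (x : ℂ) ∈ Metric.ball (t : ℂ) r → |x - t| < r := by
    intro t x r h
    rw [Metric.mem_ball, Complex.isometry_ofReal.dist_eq, Real.dist_eq] at h
    exact h
  set Ω : Set ℂ := ⋃ (t : ℝ) (_ : t ∈ I), Metric.ball (t : ℂ) (R t) with hΩ_def
  have hΩopen : IsOpen Ω := isOpen_iUnion fun t => isOpen_iUnion fun _ => Metric.isOpen_ball
  have hball_subΩ : ∀ t ∈ I, Metric.ball (t : ℂ) (R t) ⊆ Ω := by
    intro t ht z hz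
    rw [hΩ_def]
    exact Set.mem_iUnion₂.mpr ⟨t, ht, hz⟩
  -- consistency of the local extensions
  have hcons : ∀ t₁, t₁ ∈ I → ∀ t₂, t₂ ∈ I → ∀ z,
      z ∈ Metric.ball (t₁ : ℂ) (R t₁) → z ∈ Metric.ball (t₂ : ℂ) (R t₂) →
      Floc t₁ z = Floc t₂ z := by
    intro t₁ h₁ t₂ h₂ z hz₁ hz₂
    set S : Set ℂ := Metric.ball (t₁ : ℂ) (R t₁) ∩ Metric.ball (t₂ : ℂ) (R t₂) with hS_def
    have hSopen : IsOpen S := Metric.isOpen_ball.inter Metric.isOpen_ball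
    have habs : ∀ (t : ℝ) (r : ℝ), z ∈ Metric.ball (t : ℂ) r → ((z.re : ℝ) : ℂ) ∈ Metric.ball (t : ℂ) r := by
      intro t r h
      rw [Metric.mem_ball] at h ⊢
      rw [Complex.isometry_ofReal.dist_eq, Real.dist_eq]
      calc |z.re - t| = |(z - (t : ℂ)).re| := by rw [Complex.sub_re, Complex.ofReal_re]
        _ ≤ ‖z - (t : ℂ)‖ := Complex.abs_re_le_norm _
        _ < r := by rwa [Complex.dist_eq] at h
    have hzre : ((z.re : ℝ) : ℂ) ∈ S := ⟨habs t₁ _ hz₁, habs t₂ _ hz₂⟩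
    obtain ⟨ε, hε, hεsub⟩ := Metric.isOpen_iff.mp hSopen _ hzre
    have hfreq : ∃ᶠ ζ in nhdsWithin ((z.re : ℝ) : ℂ) {((z.re : ℝ) : ℂ)}ᶜ,
        Floc t₁ ζ = Floc t₂ ζ := by
      apply frequently_real z.re ε hε
      intro x _ hxε
      have hxS : (x : ℂ) ∈ S := hεsub (by
        rw [Metric.mem_ball, Complex.isometry_ofReal.dist_eq, Real.dist_eq]; exact hxε)
      have hx1 : |x - t₁| < R t₁ := hball_mem _ _ _ hxS.1
      have hx2 : |x - t₂| < R t₂ := hball_mem _ _ _ hxS.2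
      rw [hFw t₁ h₁ x hx1, hFw t₂ h₂ x hx2]
    have heq := AnalyticOnNhd.eqOn_of_preconnected_of_frequently_eq
      ((hFA t₁ h₁).mono Set.inter_subset_left) ((hFA t₂ h₂).mono Set.inter_subset_right)
      (((convex_ball _ _).inter (convex_ball _ _)).isPreconnected) hzre hfreq
    exact heq ⟨hz₁, hz₂⟩
  -- glue
  set Fg : ℂ → Fin 3 → ℂ := fun z =>
    if h : ∃ t, t ∈ I ∧ z ∈ Metric.ball ((t : ℝ) : ℂ) (R t) then Floc h.choose z else 0
    with hFg_def
  have hFgeq : ∀ t, t ∈ I → ∀ z ∈ Metric.ball ((t : ℝ) : ℂ) (R t), Fg z = Floc t z := by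
    intro t ht z hz
    have hex : ∃ t', t' ∈ I ∧ z ∈ Metric.ball ((t' : ℝ) : ℂ) (R t') := ⟨t, ht, hz⟩
    rw [hFg_def]
    simp only [dif_pos hex]
    exact hcons _ hex.choose_spec.1 t ht z hex.choose_spec.2 hz
  have hFgA : AnalyticOnNhd ℂ Fg Ω := by
    intro z hz
    rw [hΩ_def, Set.mem_iUnion] at hz
    obtain ⟨t, hz⟩ := hz
    rw [Set.mem_iUnion] at hz
    obtain ⟨ht, hzb⟩ := hz
    apply ((hFA t ht) z hzb).congr
    filter_upwards [Metric.isOpen_ball.mem_nhds hzb] with ζ hζ using (hFgeq t ht ζ hζ).symm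
  have hFgw : ∀ t, t ∈ I → ∀ x : ℝ, |x - t| < R t → Fg x = w x := by
    intro t ht x hx
    rw [hFgeq t ht _ (hmem_ball t x _ hx), hFw t ht x hx]
  -- derivative of the glued map on the real axis
  have hFgd : ∀ t, t ∈ I → deriv Fg ((t : ℝ) : ℂ) = wd t := by
    intro t ht
    have htΩ : ((t : ℝ) : ℂ) ∈ Ω := hball_subΩ t ht (Metric.mem_ball_self (hR t ht))
    have h1 : HasDerivAt Fg (deriv Fg ((t : ℝ) : ℂ)) ((t : ℝ) : ℂ) :=
      ((hFgA _ htΩ).differentiableAt).hasDerivAt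
    have h2 : HasDerivAt (fun x : ℝ => Fg ((x : ℝ) : ℂ)) (deriv Fg ((t : ℝ) : ℂ)) t := by
      have hF := (h1.hasFDerivAt.restrictScalars ℝ).comp_hasDerivAt t
        (Complex.ofRealCLM.hasDerivAt (x := t))
      simpa [Function.comp_def] using hF
    have h3 : HasDerivAt w (deriv Fg ((t : ℝ) : ℂ)) t := by
      apply h2.congr_of_eventuallyEq
      have hev : ∀ᶠ x in nhds t, |x - t| < R t := by
        have := Metric.ball_mem_nhds t (hR t ht)
        filter_upwards [this] with x hx
        rwa [Metric.mem_ball, Real.dist_eq] at hx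
      filter_upwards [hev] with x hx using (hFgw t ht x hx).symm
    exact h3.unique (hwd' t ht)
  -- the holomorphic quadratic expression vanishes on Ω
  set Q : ℂ → ℂ := fun z => (deriv Fg z 0)^2 + (deriv Fg z 1)^2 + (deriv Fg z 2)^2 with hQ_def
  have hFgdA : AnalyticOnNhd ℂ (deriv Fg) Ω := hFgA.deriv
  have hQA : AnalyticOnNhd ℂ Q Ω := by
    intro z hz
    have hcompz : ∀ i : Fin 3, AnalyticAt ℂ (fun ζ => deriv Fg ζ i) z := fun i =>
      ((ContinuousLinearMap.proj (R := ℂ) (φ := fun _ : Fin 3 => ℂ) i).analyticAt _).comp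
        (hFgdA z hz)
    exact (((hcompz 0).pow 2).add ((hcompz 1).pow 2)).add ((hcompz 2).pow 2)
  have hQreal : ∀ x ∈ I, Q ((x : ℝ) : ℂ) = 0 := by
    intro x hx
    have hgg : dot3 (g x) (g x) = dot3 (c x) (c x) := cross_norm _ _ (hn₀unit x hx) (horthc x hx)
    have hcg : dot3 (c x) (g x) = 0 := cross_dot_self _ _
    rw [hQ_def]
    simp only [hFgd x hx, hwd_def]
    simp only [dot3] at hgg hcg
    rw [Complex.ext_iff]
    constructor
    · simp only [pow_two, Complex.mul_re, Complex.mul_im, Complex.add_re, Complex.sub_re,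
        Complex.sub_im, Complex.ofReal_re, Complex.ofReal_im, Complex.I_re, Complex.I_im,
        Complex.zero_re]
      ring_nf
      nlinarith [hgg]
    · simp only [pow_two, Complex.mul_re, Complex.mul_im, Complex.add_im, Complex.sub_re,
        Complex.sub_im, Complex.ofReal_re, Complex.ofReal_im, Complex.I_re, Complex.I_im,
        Complex.zero_im]
      ring_nf
      nlinarith [hcg]
  have hQΩ : ∀ z ∈ Ω, Q z = 0 := by
    intro z hz
    rw [hΩ_def, Set.mem_iUnion] at hz
    obtain ⟨t, hz⟩ := hz
    rw [Set.mem_iUnion] at hz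
    obtain ⟨ht, hzb⟩ := hz
    have hfreq : ∃ᶠ ζ in nhdsWithin ((t : ℝ) : ℂ) {((t : ℝ) : ℂ)}ᶜ, Q ζ = (fun _ => (0:ℂ)) ζ := by
      apply frequently_real t (R t) (hR t ht)
      intro x _ hxlt
      exact hQreal x (hRsub t ht x hxlt)
    have heq := AnalyticOnNhd.eqOn_of_preconnected_of_frequently_eq
      (hQA.mono (hball_subΩ t ht)) (analyticOnNhd_const (v := (0:ℂ)))
      ((convex_ball _ _).isPreconnected) (Metric.mem_ball_self (hR t ht)) hfreq
    exact heq hzb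
  -- the good set V and its preimage U
  set V : Set ℂ := Ω ∩ (deriv Fg) ⁻¹' ({0}ᶜ) with hV_def
  have hVopen : IsOpen V :=
    ContinuousOn.isOpen_inter_preimage hFgdA.continuousOn hΩopen isOpen_compl_singleton
  have hVΩ : V ⊆ Ω := Set.inter_subset_left
  set φ : ℝ × ℝ → ℂ := fun p => (p.1 : ℂ) + (p.2 : ℂ) * Complex.I with hφ_def
  have hφcont : Continuous φ :=
    (Complex.continuous_ofReal.comp continuous_fst).add
      ((Complex.continuous_ofReal.comp continuous_snd).mul continuous_const)
  set U : Set (ℝ × ℝ) := φ ⁻¹' V with hU_def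
  have hUopen : IsOpen U := hVopen.preimage hφcont
  have hφt0 : ∀ t : ℝ, φ (t, 0) = ((t : ℝ) : ℂ) := by
    intro t; rw [hφ_def]; simp
  have haxis : ∀ t ∈ I, ((t : ℝ) : ℂ) ∈ V := by
    intro t ht
    refine ⟨hball_subΩ t ht (Metric.mem_ball_self (hR t ht)), ?_⟩
    simp only [Set.mem_preimage, Set.mem_compl_iff, Set.mem_singleton_iff]
    rw [hFgd t ht]
    intro h0
    apply hγ₁'ne t ht
    funext i
    have hi := congrFun h0 i
    rw [hwd_def] at hi
    have hre := congrArg Complex.re hi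
    simpa using hre
  have hUt0 : ∀ t ∈ I, ((t, 0) : ℝ × ℝ) ∈ U := by
    intro t ht
    rw [hU_def]
    simp only [Set.mem_preimage, hφt0]
    exact haxis t ht
  -- the surface
  set rS : ℝ × ℝ → Fin 3 → ℝ := fun p i => (Fg (φ p) i).re with hrS_def
  -- first partial derivatives
  have hDu : ∀ p : ℝ × ℝ, φ p ∈ Ω → Du rS p = fun i => ((deriv Fg (φ p)) i).re := by
    intro p hp
    funext i
    have hdF : HasDerivAt Fg (deriv Fg (φ p)) (φ p) := ((hFgA _ hp).differentiableAt).hasDerivAt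
    have hin : HasDerivAt (fun s : ℝ => ((s : ℂ) + (p.2 : ℂ) * Complex.I)) 1 p.1 := by
      simpa using (Complex.ofRealCLM.hasDerivAt (x := p.1)).add_const ((p.2 : ℂ) * Complex.I)
    have hcomp : HasDerivAt (fun s : ℝ => Fg ((s : ℂ) + (p.2 : ℂ) * Complex.I))
        (deriv Fg (φ p)) p.1 := by
      have h := (hdF.hasFDerivAt.restrictScalars ℝ).comp_hasDerivAt p.1 hin
      simpa [Function.comp_def] using h
    have hM := (Complex.reCLM.comp
      (ContinuousLinearMap.proj (R := ℝ) (φ := fun _ : Fin 3 => ℂ) i)).hasFDerivAt.comp_hasDerivAt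
      p.1 hcomp
    exact hM.deriv
  have hDv : ∀ p : ℝ × ℝ, φ p ∈ Ω →
      Dv rS p = fun i => (Complex.I * ((deriv Fg (φ p)) i)).re := by
    intro p hp
    funext i
    have hdF : HasDerivAt Fg (deriv Fg (φ p)) (φ p) := ((hFgA _ hp).differentiableAt).hasDerivAt
    have hin : HasDerivAt (fun v : ℝ => ((p.1 : ℂ) + (v : ℂ) * Complex.I)) Complex.I p.2 := by
      simpa using ((Complex.ofRealCLM.hasDerivAt (x := p.2)).mul_const Complex.I).const_add
        ((p.1 : ℂ))
    have hcomp : HasDerivAt (fun v : ℝ => Fg ((p.1 : ℂ) + (v : ℂ) * Complex.I))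
        (Complex.I • deriv Fg (φ p)) p.2 := by
      have h := (hdF.hasFDerivAt.restrictScalars ℝ).comp_hasDerivAt p.2 hin
      simpa [Function.comp_def] using h
    have hM := (Complex.reCLM.comp
      (ContinuousLinearMap.proj (R := ℝ) (φ := fun _ : Fin 3 => ℂ) i)).hasFDerivAt.comp_hasDerivAt
      p.2 hcomp
    have := hM.deriv
    simp [Function.comp_def] at this
    rw [show (Complex.I * deriv Fg (φ p) i).re = -(deriv Fg (φ p) i).im by simp]
    exact this
  -- second partial derivatives
  have hslice_u : ∀ p : ℝ × ℝ, φ p ∈ Ω → ∀ᶠ s in nhds p.1, φ (s, p.2) ∈ Ω := by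
    intro p hp
    have hcont : Continuous (fun s : ℝ => φ (s, p.2)) := hφcont.comp (by fun_prop)
    have : φ (p.1, p.2) ∈ Ω := by
      have : (p.1, p.2) = p := rfl
      rw [this]; exact hp
    exact hcont.continuousAt.eventually_mem (hΩopen.mem_nhds this)
  have hslice_v : ∀ p : ℝ × ℝ, φ p ∈ Ω → ∀ᶠ v in nhds p.2, φ (p.1, v) ∈ Ω := by
    intro p hp
    have hcont : Continuous (fun v : ℝ => φ (p.1, v)) := hφcont.comp (by fun_prop)
    have : φ (p.1, p.2) ∈ Ω := by
      have : (p.1, p.2) = p := rfl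
      rw [this]; exact hp
    exact hcont.continuousAt.eventually_mem (hΩopen.mem_nhds this)
  have hDuu : ∀ p : ℝ × ℝ, φ p ∈ Ω →
      Du (Du rS) p = fun i => ((deriv (deriv Fg) (φ p)) i).re := by
    intro p hp
    funext i
    have hev : (fun s => Du rS (s, p.2) i) =ᶠ[nhds p.1]
        fun s => ((deriv Fg (φ (s, p.2))) i).re := by
      filter_upwards [hslice_u p hp] with s hs using congrFun (hDu (s, p.2) hs) i
    show deriv (fun s => Du rS (s, p.2) i) p.1 = _
    rw [hev.deriv_eq]
    have hdF : HasDerivAt (deriv Fg) (deriv (deriv Fg) (φ p)) (φ p) :=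
      ((hFgdA _ hp).differentiableAt).hasDerivAt
    have hin : HasDerivAt (fun s : ℝ => ((s : ℂ) + (p.2 : ℂ) * Complex.I)) 1 p.1 := by
      simpa using (Complex.ofRealCLM.hasDerivAt (x := p.1)).add_const ((p.2 : ℂ) * Complex.I)
    have hcomp : HasDerivAt (fun s : ℝ => deriv Fg ((s : ℂ) + (p.2 : ℂ) * Complex.I))
        (deriv (deriv Fg) (φ p)) p.1 := by
      have h := (hdF.hasFDerivAt.restrictScalars ℝ).comp_hasDerivAt p.1 hin
      simpa [Function.comp_def] using h
    have hM := (Complex.reCLM.comp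
      (ContinuousLinearMap.proj (R := ℝ) (φ := fun _ : Fin 3 => ℂ) i)).hasFDerivAt.comp_hasDerivAt
      p.1 hcomp
    exact hM.deriv
  have hDvv : ∀ p : ℝ × ℝ, φ p ∈ Ω →
      Dv (Dv rS) p = fun i => (Complex.I * (Complex.I * ((deriv (deriv Fg) (φ p)) i))).re := by
    intro p hp
    funext i
    have hev : (fun v => Dv rS (p.1, v) i) =ᶠ[nhds p.2]
        fun v => (Complex.I * ((deriv Fg (φ (p.1, v))) i)).re := by
      filter_upwards [hslice_v p hp] with v hv using congrFun (hDv (p.1, v) hv) i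
    show deriv (fun v => Dv rS (p.1, v) i) p.2 = _
    rw [hev.deriv_eq]
    have hdF : HasDerivAt (deriv Fg) (deriv (deriv Fg) (φ p)) (φ p) :=
      ((hFgdA _ hp).differentiableAt).hasDerivAt
    have hin : HasDerivAt (fun v : ℝ => ((p.1 : ℂ) + (v : ℂ) * Complex.I)) Complex.I p.2 := by
      simpa using ((Complex.ofRealCLM.hasDerivAt (x := p.2)).mul_const Complex.I).const_add
        ((p.1 : ℂ))
    have hcomp : HasDerivAt (fun v : ℝ => deriv Fg ((p.1 : ℂ) + (v : ℂ) * Complex.I))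
        (Complex.I • deriv (deriv Fg) (φ p)) p.2 := by
      have h := (hdF.hasFDerivAt.restrictScalars ℝ).comp_hasDerivAt p.2 hin
      simpa [Function.comp_def] using h
    have hM := (Complex.reCLM.comp
      ((((Complex.I • ContinuousLinearMap.id ℂ ℂ).restrictScalars ℝ)).comp
        (ContinuousLinearMap.proj (R := ℝ) (φ := fun _ : Fin 3 => ℂ) i))).hasFDerivAt.comp_hasDerivAt
      p.2 hcomp
    have hM' : HasDerivAt (fun v : ℝ => (Complex.I * ((deriv Fg (φ (p.1, v))) i)).re)
        ((Complex.I * (Complex.I * ((deriv (deriv Fg) (φ p)) i))).re) p.2 := by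
      have hval : (Complex.reCLM.comp
          ((((Complex.I • ContinuousLinearMap.id ℂ ℂ).restrictScalars ℝ)).comp
            (ContinuousLinearMap.proj (R := ℝ) (φ := fun _ : Fin 3 => ℂ) i)))
          (Complex.I • deriv (deriv Fg) (φ p))
          = (Complex.I * (Complex.I * ((deriv (deriv Fg) (φ p)) i))).re := by
        simp
      rw [← hval]
      have hfun : (fun v : ℝ => (Complex.I * ((deriv Fg (φ (p.1, v))) i)).re)
          = (Complex.reCLM.comp
          ((((Complex.I • ContinuousLinearMap.id ℂ ℂ).restrictScalars ℝ)).comp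
            (ContinuousLinearMap.proj (R := ℝ) (φ := fun _ : Fin 3 => ℂ) i))) ∘
          (fun v : ℝ => deriv Fg ((p.1 : ℂ) + (v : ℂ) * Complex.I)) := by
        funext v
        simp [hφ_def]
      rw [hfun]
      exact hM
    exact hM'.deriv
  -- conformal harmonic
  have hCH : ConformalHarmonic rS U := by
    intro p hp
    rw [hU_def, Set.mem_preimage] at hp
    have hΩp : φ p ∈ Ω := hVΩ hp
    have hdne : deriv Fg (φ p) ≠ 0 := by
      have := hp.2
      simpa using this
    have hQp := hQΩ (φ p) hΩp
    rw [hQ_def] at hQp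
    have hre : (deriv Fg (φ p) 0).re^2 + (deriv Fg (φ p) 1).re^2 + (deriv Fg (φ p) 2).re^2
        = (deriv Fg (φ p) 0).im^2 + (deriv Fg (φ p) 1).im^2 + (deriv Fg (φ p) 2).im^2 := by
      have h := congrArg Complex.re hQp
      simp only [pow_two, Complex.add_re, Complex.mul_re, Complex.zero_re] at h
      ring_nf at h ⊢
      linarith
    have him : (deriv Fg (φ p) 0).re * (deriv Fg (φ p) 0).im
        + (deriv Fg (φ p) 1).re * (deriv Fg (φ p) 1).im
        + (deriv Fg (φ p) 2).re * (deriv Fg (φ p) 2).im = 0 := by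
      have h := congrArg Complex.im hQp
      simp only [pow_two, Complex.add_im, Complex.mul_im, Complex.zero_im] at h
      ring_nf at h ⊢
      linarith
    refine ⟨?_, ?_, ?_, ?_⟩
    · rw [hDuu p hΩp, hDvv p hΩp]
      funext i
      simp only [Pi.add_apply, Pi.zero_apply, Complex.mul_re, Complex.mul_im,
        Complex.I_re, Complex.I_im]
      ring
    · rw [hDu p hΩp, hDv p hΩp]
      simp only [dot3, Complex.mul_re, Complex.I_re, Complex.I_im]
      ring_nf
      linarith [him]
    · apply norm3_eq_of_dot3_eq
      rw [hDu p hΩp, hDv p hΩp]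
      simp only [dot3, Complex.mul_re, Complex.I_re, Complex.I_im]
      ring_nf
      linarith [hre]
    · rw [hDu p hΩp]
      intro h0
      have hdot : dot3 (fun i => ((deriv Fg (φ p)) i).re) (fun i => ((deriv Fg (φ p)) i).re)
          = 0 := by
        have := (Real.sqrt_eq_zero (dot3_self_nonneg _)).mp h0
        exact this
      simp only [dot3] at hdot
      have h00 : (deriv Fg (φ p) 0).re = 0 ∧ (deriv Fg (φ p) 1).re = 0
          ∧ (deriv Fg (φ p) 2).re = 0 := by
        refine ⟨?_, ?_, ?_⟩ <;>
          nlinarith [sq_nonneg ((deriv Fg (φ p) 0).re), sq_nonneg ((deriv Fg (φ p) 1).re),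
            sq_nonneg ((deriv Fg (φ p) 2).re)]
      have him0 : (deriv Fg (φ p) 0).im = 0 ∧ (deriv Fg (φ p) 1).im = 0
          ∧ (deriv Fg (φ p) 2).im = 0 := by
        refine ⟨?_, ?_, ?_⟩ <;>
          nlinarith [sq_nonneg ((deriv Fg (φ p) 0).im), sq_nonneg ((deriv Fg (φ p) 1).im),
            sq_nonneg ((deriv Fg (φ p) 2).im), h00.1, h00.2.1, h00.2.2, hre]
      apply hdne
      funext i
      apply Complex.ext
      · fin_cases i
        · exact h00.1
        · exact h00.2.1
        · exact h00.2.2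
      · fin_cases i
        · exact him0.1
        · exact him0.2.1
        · exact him0.2.2
  -- boundary values on the axis
  have hΩt0 : ∀ t ∈ I, φ (t, 0) ∈ Ω := by
    intro t ht
    rw [hφt0 t]
    exact hball_subΩ t ht (Metric.mem_ball_self (hR t ht))
  have hrt0 : ∀ t ∈ I, rS (t, 0) = γ₁ t := by
    intro t ht
    funext i
    show (Fg (φ (t, 0)) i).re = γ₁ t i
    rw [hφt0 t, hFgw t ht t (by simpa using hR t ht), hw_def]
    simp
  have hDut : ∀ t ∈ I, Du rS (t, 0) = c t := by
    intro t ht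
    rw [hDu (t, 0) (hΩt0 t ht)]
    funext i
    rw [hφt0 t, hFgd t ht, hwd_def]
    simp
  have hDvt : ∀ t ∈ I, Dv rS (t, 0) = g t := by
    intro t ht
    rw [hDv (t, 0) (hΩt0 t ht)]
    funext i
    rw [hφt0 t, hFgd t ht, hwd_def]
    simp [Complex.mul_re]
  have hnvec : ∀ t ∈ I, nvec rS (t, 0) = (norm3 (γ₂ t))⁻¹ • γ₂ t := by
    intro t ht
    have hcross : crossProduct (Du rS (t, 0)) (Dv rS (t, 0)) = dot3 (c t) (c t) • n₀ t := by
      rw [hDut t ht, hDvt t ht, hg_def]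
      exact cross_triple _ _ (horthc t ht)
    have hk : 0 < dot3 (c t) (c t) := dot3_self_pos (hγ₁'ne t ht)
    have hn1 : norm3 (n₀ t) = 1 := by
      rw [norm3, hn₀unit t ht, Real.sqrt_one]
    show (norm3 (crossProduct (Du rS (t, 0)) (Dv rS (t, 0))))⁻¹ •
      crossProduct (Du rS (t, 0)) (Dv rS (t, 0)) = (norm3 (γ₂ t))⁻¹ • γ₂ t
    rw [hcross, norm3_smul_of_nonneg hk.le, hn1, mul_one, smul_smul,
      inv_mul_cancel₀ hk.ne', one_smul]
  -- smoothness
  have hsmooth : ContDiffOn ℝ (⊤ : ℕ∞) rS U := by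
    have hFgV : AnalyticOnNhd ℂ Fg V := hFgA.mono hVΩ
    have h1 : ContDiffOn ℂ ⊤ Fg V := hFgV.contDiffOn hVopen.uniqueDiffOn
    have h2 : ContDiffOn ℝ (⊤ : ℕ∞) Fg V := (h1.restrict_scalars ℝ).of_le le_top
    have hφCD : ContDiff ℝ (⊤ : ℕ∞) φ := by
      apply ContDiff.add
      · exact Complex.ofRealCLM.contDiff.comp contDiff_fst
      · exact (Complex.ofRealCLM.contDiff.comp contDiff_snd).mul contDiff_const
    have h3 : ContDiffOn ℝ (⊤ : ℕ∞) (Fg ∘ φ) U := h2.comp hφCD.contDiffOn (fun p hp => hp)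
    have h4 : ContDiffOn ℝ (⊤ : ℕ∞) ((ContinuousLinearMap.pi
        (fun i : Fin 3 => Complex.reCLM.comp
          (ContinuousLinearMap.proj (R := ℝ) (φ := fun _ : Fin 3 => ℂ) i))) ∘ (Fg ∘ φ)) U :=
      (ContinuousLinearMap.contDiff _).comp_contDiffOn h3
    exact h4
  refine ⟨U, hUopen, hUt0, rS, hsmooth, hCH, hrt0, hnvec, ?_⟩
  intro t ht
  refine ⟨(t, 0), hUt0 t ht, norm3 (γ₂ t), hrt0 t ht, ?_⟩
  rw [hnvec t ht, smul_smul, mul_inv_cancel₀ (norm3_ne_zero (hγ₂ne t ht)), one_smul]
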